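/- Fix κ ∈ (−1/2, 0) and c > 0, and let f = −y^{1+2κ}/(1+2κ) − c t², z = −4c on the region {0 < r < 1} of ℝ^{1+n}. Then w_{f,z} and 𝒜_{f,z} satisfy the pointwise identities: w_{f,z} = −2κ y^{2κ−1} + (1/2)(n−1) y^{2κ} r^{−1} − 3c, and 𝒜_{f,z} = 2κ(2κ−1)² y^{2κ−3} − (1/2)(n−1)κ(8κ−3) y^{2κ−2} r^{−1} + (1/2)(n−1)(n−4)κ y^{2κ−1} r^{−2} + (1/4)(n−1)(n−3) y^{2κ} r^{−3}. -/

import Mathlib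

open MeasureTheory Real Filter

noncomputable section

namespace CarlemanWave

/-- Euclidean space `ℝⁿ`. -/
abbrev Spc (n : ℕ) : Type := EuclideanSpace ℝ (Fin n)

variable {n : ℕ}

/-- The `i`-th standard basis vector. -/
def esingle (n : ℕ) (i : Fin n) : Spc n := EuclideanSpace.single i 1

/-- Time derivative `∂ₜ u`. -/
def pdt (u : ℝ → Spc n → ℝ) (t : ℝ) (x : Spc n) : ℝ := deriv (fun s => u s x) t

/-- Spatial partial derivative `∂ᵢ u`. -/
def pdx (u : ℝ → Spc n → ℝ) (i : Fin n) (t : ℝ) (x : Spc n) : ℝ :=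
  fderiv ℝ (fun z => u t z) x (esingle n i)

/-- Radial derivative `∂ᵣ u`. -/
def pdr (u : ℝ → Spc n → ℝ) (t : ℝ) (x : Spc n) : ℝ :=
  fderiv ℝ (fun z => u t z) x (‖x‖⁻¹ • x)

/-- Spatial Laplacian. -/
def lap (u : ℝ → Spc n → ℝ) (t : ℝ) (x : Spc n) : ℝ :=
  ∑ i, pdx (fun s z => pdx u i s z) i t x

/-- Wave operator `□ = −∂ₜₜ + Δ`. -/
def waveOp (u : ℝ → Spc n → ℝ) (t : ℝ) (x : Spc n) : ℝ :=
  - pdt (fun s z => pdt u s z) t x + lap u t x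

/-- Singular wave operator `□_κ = □ + κ(1−κ)/(1−|x|)²`. -/
def boxKappa (κ : ℝ) (u : ℝ → Spc n → ℝ) (t : ℝ) (x : Spc n) : ℝ :=
  waveOp u t x + κ * (1 - κ) / (1 - ‖x‖)^2 * u t x

/-- Twisted spatial derivative `Dᵢu = ∂ᵢu − (κ/y)∂ᵢy · u`, where `y = 1 − |x|`
and `∂ᵢ y = −xᵢ/r`. -/
def Dx (κ : ℝ) (u : ℝ → Spc n → ℝ) (i : Fin n) (t : ℝ) (x : Spc n) : ℝ :=
  pdx u i t x + (κ / (1 - ‖x‖)) * (x i / ‖x‖) * u t x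

/-- Twisted radial derivative `Dᵣu = ∂ᵣu + (κ/y)u`. -/
def Dr (κ : ℝ) (u : ℝ → Spc n → ℝ) (t : ℝ) (x : Spc n) : ℝ :=
  pdr u t x + (κ / (1 - ‖x‖)) * u t x

/-- Conjugate twisted radial derivative `D̄ᵣu = ∂ᵣu − (κ/y)u`. -/
def Dbr (κ : ℝ) (u : ℝ → Spc n → ℝ) (t : ℝ) (x : Spc n) : ℝ :=
  pdr u t x - (κ / (1 - ‖x‖)) * u t x

/-- Twisted wave operator `□_y = g^{αβ} D̄_α D_β` (Minkowski metric,
Cartesian coordinates). -/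
def boxY (κ : ℝ) (u : ℝ → Spc n → ℝ) (t : ℝ) (x : Spc n) : ℝ :=
  - pdt (fun s z => pdt u s z) t x
    + ∑ i, (pdx (fun s z => Dx κ u i s z) i t x
        - (κ / (1 - ‖x‖)) * (x i / ‖x‖) * Dx κ u i t x)

/-- Squared norm of the spatial gradient. -/
def gradSq (u : ℝ → Spc n → ℝ) (t : ℝ) (x : Spc n) : ℝ := ∑ i, (pdx u i t x)^2

/-- Squared norm of the angular gradient `|∇̸u|²`. -/
def angSq (u : ℝ → Spc n → ℝ) (t : ℝ) (x : Spc n) : ℝ := gradSq u t x - (pdr u t x)^2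

/-- Minkowski contraction `D_β u D^β u`. -/
def DD (κ : ℝ) (u : ℝ → Spc n → ℝ) (t : ℝ) (x : Spc n) : ℝ :=
  -(pdt u t x)^2 + ∑ i, (Dx κ u i t x)^2

/-- The `i`-th Cartesian component of the angular gradient `∇̸u`. -/
def angComp (u : ℝ → Spc n → ℝ) (i : Fin n) (t : ℝ) (x : Spc n) : ℝ :=
  pdx u i t x - (x i / ‖x‖) * pdr u t x

/-- `w_{f,z} = ½(□f + (2κ/y)∇_α y ∇^α f) + z`; here `∇_α y ∇^α f = −∂ᵣ f`. -/
def wfz (κ : ℝ) (f : ℝ → Spc n → ℝ) (z : ℝ) (t : ℝ) (x : Spc n) : ℝ :=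
  (1/2) * (waveOp f t x - (2*κ / (1 - ‖x‖)) * pdr f t x) + z

/-- `𝒜_{f,z} = −½(□w_{f,z} + (2κ/y)∇_α y ∇^α w_{f,z})`. -/
def Afz (κ : ℝ) (f : ℝ → Spc n → ℝ) (z : ℝ) (t : ℝ) (x : Spc n) : ℝ :=
  -(1/2) * (waveOp (wfz κ f z) t x - (2*κ / (1 - ‖x‖)) * pdr (wfz κ f z) t x)

/-- Multiplier `S_{f,z}u = ∇^α f D_α u + w_{f,z} u`. -/
def Sfz (κ : ℝ) (f : ℝ → Spc n → ℝ) (z : ℝ) (u : ℝ → Spc n → ℝ) (t : ℝ) (x : Spc n) : ℝ :=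
  - pdt f t x * pdt u t x + (∑ i, pdx f i t x * Dx κ u i t x) + wfz κ f z t x * u t x

/-- Hessian contraction `∇^{αβ} f D_α u D_β u`. -/
def hessQ (κ : ℝ) (f : ℝ → Spc n → ℝ) (u : ℝ → Spc n → ℝ) (t : ℝ) (x : Spc n) : ℝ :=
  pdt (fun s z => pdt f s z) t x * (pdt u t x)^2
    - 2 * ∑ i, pdt (fun s z => pdx f i s z) t x * pdt u t x * Dx κ u i t x
    + ∑ i, ∑ j, pdx (fun s z => pdx f j s z) i t x * Dx κ u i t x * Dx κ u j t x

/-- The Carleman weight `f = −y^{1+2κ}/(1+2κ) − c t²`. -/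
def fC (κ c : ℝ) (t : ℝ) (x : Spc n) : ℝ :=
  -(1 - ‖x‖) ^ (1 + 2*κ) / (1 + 2*κ) - c * t^2

/-- The weight `f_q = −y^{1+q}/(1+q)`. -/
def fQ (q : ℝ) (_t : ℝ) (x : Spc n) : ℝ := -(1 - ‖x‖) ^ (1 + q) / (1 + q)

/-- Integral over the sphere of radius `ρ` with respect to the
`(n−1)`-dimensional Hausdorff measure. -/
def sphInt {n : ℕ} (ρ : ℝ) (F : Spc n → ℝ) : ℝ :=
  ∫ ω in Metric.sphere (0 : Spc n) ρ, F ω ∂μH[(n : ℝ) - 1]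

/-- Lateral boundary integral over `(−T,T) × {r = ρ}`. -/
def bdryInt {n : ℕ} (T ρ : ℝ) (F : ℝ → Spc n → ℝ) : ℝ :=
  ∫ t in Set.Ioo (-T) T, sphInt ρ (F t)

/-- Integral over the cylinder `(−T,T) × B₁`. -/
def cylInt {n : ℕ} (T : ℝ) (F : ℝ → Spc n → ℝ) : ℝ :=
  ∫ t in Set.Ioo (-T) T, ∫ x in Metric.ball (0 : Spc n) 1, F t x

/-- Integral over `𝒞_ε = (−T,T) × {ε < r < 1−ε}`. -/
def annInt {n : ℕ} (T ε : ℝ) (F : ℝ → Spc n → ℝ) : ℝ :=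
  ∫ t in Set.Ioo (-T) T, ∫ x in {z : Spc n | ε < ‖z‖ ∧ ‖z‖ < 1 - ε}, F t x

/-- Signed lateral boundary integral over `Γ_ε`; the first argument of `F`
records the orientation `s` of the outward normal `ν = s ∂ᵣ` (so `s = 1` on
the outer boundary `r = 1 − ε` and `s = −1` on the inner boundary `r = ε`). -/
def bdrySigned {n : ℕ} (T ε : ℝ) (F : ℝ → ℝ → Spc n → ℝ) : ℝ :=
  bdryInt T (1 - ε) (F 1) + bdryInt T ε (F (-1))

/-- `L²`-limit, as the boundary distance `h ↘ 0`, of a one-parameter family of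
functions on `(−T,T) × 𝕊^{n−1}`. -/
def L2BdryLimit (n : ℕ) (T : ℝ) (g : ℝ → ℝ → Spc n → ℝ) (w : ℝ → Spc n → ℝ) : Prop :=
  Tendsto (fun h : ℝ => bdryInt T 1 (fun t ω => (g h t ω - w t ω)^2))
    (nhdsWithin 0 (Set.Ioi 0)) (nhds 0)

/-- The Dirichlet trace `𝒟_κ u = lim_{r↗1} y^{−κ} u`, in the `L²` sense. -/
def HasDirichletTrace (n : ℕ) (T κ : ℝ) (u w : ℝ → Spc n → ℝ) : Prop :=
  L2BdryLimit n T (fun h t ω => h ^ (-κ) * u t ((1 - h) • ω)) w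

/-- The Neumann trace `𝒩_κ u = lim_{r↗1} y^{2κ} ∂ᵣ(y^{−κ}u)`, in the `L²` sense. -/
def HasNeumannTrace (n : ℕ) (T κ : ℝ) (u N : ℝ → Spc n → ℝ) : Prop :=
  L2BdryLimit n T
    (fun h t ω => h ^ (2*κ) *
      fderiv ℝ (fun z : Spc n => (1 - ‖z‖) ^ (-κ) * u t z) ((1 - h) • ω) ω) N

/-- Square integrability (finiteness) of a function on the lateral boundary
`(−T,T) × 𝕊^{n−1}`. -/
def FiniteOnBdry (n : ℕ) (T : ℝ) (N : ℝ → Spc n → ℝ) : Prop :=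
  (∫⁻ t in Set.Ioo (-T) T,
      ∫⁻ ω in Metric.sphere (0 : Spc n) 1, ENNReal.ofReal ((N t ω)^2) ∂μH[(n : ℝ) - 1]) < ⊤

/-- Boundary admissibility (Definition 2.2): the Neumann trace `N` exists and is
finite, and the two Dirichlet limits `(1−2κ)𝒟_κ(y^{−1+2κ}u) = −𝒩_κ u` and
`𝒟_κ(y^{2κ}∂ₜu) = 0` hold in the `L²` sense. -/
def BoundaryAdmissible (n : ℕ) (T κ : ℝ) (u N : ℝ → Spc n → ℝ) : Prop :=
  HasNeumannTrace n T κ u N ∧ FiniteOnBdry n T N ∧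
  L2BdryLimit n T (fun h t ω => (1 - 2*κ) * (h ^ (κ - 1) * u t ((1 - h) • ω)))
    (fun t ω => -(N t ω)) ∧
  L2BdryLimit n T (fun h t ω => h ^ κ * deriv (fun s => u s ((1 - h) • ω)) t)
    (fun _ _ => 0)

/-- Twisted `H¹` energy density. -/
def E1d (κ : ℝ) (u : ℝ → Spc n → ℝ) (t : ℝ) (x : Spc n) : ℝ :=
  (pdt u t x)^2 + (Dr κ u t x)^2 + angSq u t x + (u t x)^2

/-- Twisted `H¹` energy `E₁[u](τ)`. -/
def E1 (κ : ℝ) (u : ℝ → Spc n → ℝ) (τ : ℝ) : ℝ :=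
  ∫ x in Metric.ball (0 : Spc n) 1, E1d κ u τ x

/-- Conjugate twisted `H¹` energy density (with `D̄ᵣ`). -/
def E1dBar (κ : ℝ) (u : ℝ → Spc n → ℝ) (t : ℝ) (x : Spc n) : ℝ :=
  (pdt u t x)^2 + (Dbr κ u t x)^2 + angSq u t x + (u t x)^2

/-- Twisted `H²` energy density:
`Ē₁[Dᵣu] + E₁[∂ₜu] + E₁[∇̸u] + E₁[u]`. -/
def E2d (κ : ℝ) (u : ℝ → Spc n → ℝ) (t : ℝ) (x : Spc n) : ℝ :=
  E1dBar κ (Dr κ u) t x + E1d κ (fun s z => pdt u s z) t x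
    + (∑ i, E1d κ (angComp u i) t x) + E1d κ u t x

/-- Twisted `H²` energy `E₂[u](τ)`. -/
def E2 (κ : ℝ) (u : ℝ → Spc n → ℝ) (τ : ℝ) : ℝ :=
  ∫ x in Metric.ball (0 : Spc n) 1, E2d κ u τ x

/-- Twisted derivative along a spacetime vector field: `D_X u = X^α D_α u`. -/
def DtwX (κ : ℝ) (X : ℝ × Spc n → ℝ × Spc n) (u : ℝ → Spc n → ℝ) (t : ℝ) (x : Spc n) : ℝ :=
  (X (t, x)).1 * pdt u t x + ∑ i, (X (t, x)).2 i * Dx κ u i t x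

/-- Smoothness on the open cylinder `𝒞 = (−T,T) × B₁`. -/
def SmoothOnCyl (n : ℕ) (T : ℝ) (u : ℝ → Spc n → ℝ) : Prop :=
  ContDiffOn ℝ (⊤ : ℕ∞) (fun p : ℝ × Spc n => u p.1 p.2)
    (Set.Ioo (-T) T ×ˢ Metric.ball (0 : Spc n) 1)

/-- The admissibility conditions on the constant `c` in the Carleman weight. -/
def cAdmissible (n : ℕ) (κ T c : ℝ) : Prop :=
  0 < c ∧ c < 1/5 ∧
    (4 ≤ n → c ≤ 1 / (4 * Real.sqrt 3 * T)) ∧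
    (n = 3 → c ≤ min (1 / (4 * Real.sqrt 15 * T)) (|κ| / 120)) ∧
    (n = 1 → c ≤ 1 / (4 * Real.sqrt 15 * T))

end CarlemanWave

/-!
Both `f` and `w_{f,z}` split as a function of `t` plus a radial function `ψ(r)` of `x`. For such
functions `□ + (2κ/y) ∇_α y ∇^α` acts as `-g''(t) + ψ'' + ((n - 1)/r - 2κ/y) ψ'`, so both
identities reduce to differentiating explicit radial profiles twice.
-/

open scoped Topology

section NormCalculus

variable {E : Type*} [NormedAddCommGroup E] [InnerProductSpace ℝ E] {x : E}

theorem hasFDerivAt_norm_of_ne_zero (hx : x ≠ 0) :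
    HasFDerivAt (fun z : E => ‖z‖) (‖x‖⁻¹ • innerSL ℝ x) x := by
  have h := (hasStrictFDerivAt_norm_sq x).hasFDerivAt.sqrt (by positivity)
  simp only [Real.sqrt_sq (norm_nonneg _)] at h
  convert h using 1
  rw [smul_comm, ← ofNat_smul_eq_nsmul ℝ, smul_smul]
  congr 1
  field_simp

theorem HasDerivAt.hasFDerivAt_comp_norm {φ : ℝ → ℝ} {p : ℝ} (hφ : HasDerivAt φ p ‖x‖)
    (hx : x ≠ 0) : HasFDerivAt (fun z : E => φ ‖z‖) ((p / ‖x‖) • innerSL ℝ x) x := by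
  rw [div_eq_mul_inv, ← smul_smul]
  exact hφ.comp_hasFDerivAt x (hasFDerivAt_norm_of_ne_zero hx)

end NormCalculus

namespace CarlemanWave

variable {n : ℕ}

section RadialCalculus

variable {u : ℝ → Spc n → ℝ} {ψ ψ' : ℝ → ℝ} {p t : ℝ} {x : Spc n}

lemma pdx_of_eventuallyEq_radial (hu : u t =ᶠ[𝓝 x] fun z => ψ ‖z‖) (hx : x ≠ 0)
    (hψ : HasDerivAt ψ p ‖x‖) (i : Fin n) : pdx u i t x = p / ‖x‖ * x i := by
  rw [pdx, hu.fderiv_eq, (hψ.hasFDerivAt_comp_norm hx).fderiv]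
  simp [esingle, EuclideanSpace.inner_single_right]

lemma pdr_of_eventuallyEq_radial (hu : u t =ᶠ[𝓝 x] fun z => ψ ‖z‖) (hx : x ≠ 0)
    (hψ : HasDerivAt ψ p ‖x‖) : pdr u t x = p := by
  rw [pdr, hu.fderiv_eq, (hψ.hasFDerivAt_comp_norm hx).fderiv]
  have hr : ‖x‖ ≠ 0 := norm_ne_zero_iff.2 hx
  simp
  field_simp

lemma lap_of_eventuallyEq_radial (hu : u t =ᶠ[𝓝 x] fun z => ψ ‖z‖) (hx : x ≠ 0)
    (hψ : ∀ᶠ s in 𝓝 ‖x‖, HasDerivAt ψ (ψ' s) s) (hψ' : HasDerivAt ψ' p ‖x‖) :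
    lap u t x = p + (n - 1) / ‖x‖ * ψ' ‖x‖ := by
  have hr : ‖x‖ ≠ 0 := norm_ne_zero_iff.2 hx
  have hχ : HasDerivAt (fun s => ψ' s / s) ((p * ‖x‖ - ψ' ‖x‖) / ‖x‖ ^ 2) ‖x‖ := by
    simpa only [mul_one] using hψ'.fun_div (hasDerivAt_id' _) hr
  have hpdx (i : Fin n) : (fun z => pdx u i t z) =ᶠ[𝓝 x] fun z => ψ' ‖z‖ / ‖z‖ * z i := by
    filter_upwards [hu.eventuallyEq_nhds, (continuous_norm.tendsto x).eventually hψ,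
      eventually_ne_nhds hx] with z huz hψz hz
    exact pdx_of_eventuallyEq_radial huz hz hψz i
  have hsecond (i : Fin n) : pdx (fun s z => pdx u i s z) i t x
      = (p * ‖x‖ - ψ' ‖x‖) / ‖x‖ ^ 2 / ‖x‖ * x i ^ 2 + ψ' ‖x‖ / ‖x‖ := by
    have hcoord : HasFDerivAt (fun z : Spc n => z i) (EuclideanSpace.proj i : Spc n →L[ℝ] ℝ) x :=
      (EuclideanSpace.proj i : Spc n →L[ℝ] ℝ).hasFDerivAt
    have hprod : HasFDerivAt (fun z : Spc n => ψ' ‖z‖ / ‖z‖ * z i) _ x :=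
      (hχ.hasFDerivAt_comp_norm hx).mul hcoord
    rw [pdx, (hpdx i).fderiv_eq, hprod.fderiv]
    simp [esingle, EuclideanSpace.inner_single_right]
    ring
  have hsq : ∑ i, x i ^ 2 = ‖x‖ ^ 2 := by simp [EuclideanSpace.norm_sq_eq]
  rw [lap, Finset.sum_congr rfl fun i _ => hsecond i, Finset.sum_add_distrib, ← Finset.mul_sum,
    hsq, Finset.sum_const, Finset.card_univ, Fintype.card_fin, nsmul_eq_mul]
  field_simp
  ring

lemma pdt_pdt_of_eq_add_const {g g' : ℝ → ℝ} {a q : ℝ} (hu : ∀ s, u s x = g s + a)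
    (hg : ∀ s, HasDerivAt g (g' s) s) (hg' : HasDerivAt g' q t) :
    pdt (fun s z => pdt u s z) t x = q := by
  have hpdt : (fun s => pdt u s x) = g' := by
    funext s
    simp only [pdt, hu]
    exact ((hg s).add_const a).deriv
  rw [pdt, hpdt, hg'.deriv]

lemma waveOp_sub_pdr_of_separable (κ : ℝ) {g g' : ℝ → ℝ} {q : ℝ}
    (hu : ∀ᶠ z in 𝓝 x, ∀ s, u s z = g s + ψ ‖z‖) (hx : x ≠ 0)
    (hg : ∀ s, HasDerivAt g (g' s) s) (hg' : HasDerivAt g' q t)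
    (hψ : ∀ᶠ s in 𝓝 ‖x‖, HasDerivAt ψ (ψ' s) s) (hψ' : HasDerivAt ψ' p ‖x‖) :
    waveOp u t x - 2 * κ / (1 - ‖x‖) * pdr u t x
      = -q + p + ((n - 1) / ‖x‖ - 2 * κ / (1 - ‖x‖)) * ψ' ‖x‖ := by
  have hut : u t =ᶠ[𝓝 x] fun z => g t + ψ ‖z‖ := hu.mono fun z hz => hz t
  have hψt : ∀ᶠ s in 𝓝 ‖x‖, HasDerivAt (fun s => g t + ψ s) (ψ' s) s :=
    hψ.mono fun s hs => hs.const_add _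
  rw [waveOp, pdt_pdt_of_eq_add_const hu.self_of_nhds hg hg',
    lap_of_eventuallyEq_radial hut hx hψt hψ', pdr_of_eventuallyEq_radial hut hx hψt.self_of_nhds]
  ring

end RadialCalculus

lemma hasDerivAt_one_sub_rpow (a : ℝ) {s : ℝ} (hs : s ≠ 1) :
    HasDerivAt (fun u => (1 - u) ^ a) (-(a * (1 - s) ^ (a - 1))) s := by
  convert ((hasDerivAt_id' s).const_sub 1).rpow_const (p := a) (Or.inl (sub_ne_zero.2 hs.symm))
    using 1
  ring

def fProfile (κ s : ℝ) : ℝ := -(1 - s) ^ (1 + 2 * κ) / (1 + 2 * κ)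

def wProfile (n : ℕ) (κ s : ℝ) : ℝ :=
  -(2 * κ) * (1 - s) ^ (2 * κ - 1) + (1 / 2) * ((n : ℝ) - 1) * ((1 - s) ^ (2 * κ) / s)

def wProfile' (n : ℕ) (κ s : ℝ) : ℝ :=
  2 * κ * (2 * κ - 1) * (1 - s) ^ (2 * κ - 2) - ((n : ℝ) - 1) * κ * ((1 - s) ^ (2 * κ - 1) / s)
    - (1 / 2) * ((n : ℝ) - 1) * ((1 - s) ^ (2 * κ) / s ^ 2)

def wProfile'' (n : ℕ) (κ s : ℝ) : ℝ :=
  -(2 * κ * (2 * κ - 1) * (2 * κ - 2)) * (1 - s) ^ (2 * κ - 3)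
    + ((n : ℝ) - 1) * κ * (2 * κ - 1) * ((1 - s) ^ (2 * κ - 2) / s)
    + 2 * ((n : ℝ) - 1) * κ * ((1 - s) ^ (2 * κ - 1) / s ^ 2)
    + ((n : ℝ) - 1) * ((1 - s) ^ (2 * κ) / s ^ 3)

section Profiles

variable {κ s : ℝ}

lemma hasDerivAt_fProfile (hκ : 1 + 2 * κ ≠ 0) (hs : s ≠ 1) :
    HasDerivAt (fProfile κ) ((1 - s) ^ (2 * κ)) s := by
  refine ((hasDerivAt_one_sub_rpow (1 + 2 * κ) hs).neg.div_const (1 + 2 * κ)).congr_deriv ?_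
  rw [show 1 + 2 * κ - 1 = 2 * κ by ring]
  field_simp

lemma hasDerivAt_wProfile (hs0 : s ≠ 0) (hs1 : s ≠ 1) :
    HasDerivAt (wProfile n κ) (wProfile' n κ s) s := by
  have h := ((hasDerivAt_one_sub_rpow (2 * κ - 1) hs1).const_mul (-(2 * κ))).add
    (((hasDerivAt_one_sub_rpow (2 * κ) hs1).div (hasDerivAt_id' s) hs0).const_mul
      ((1 / 2) * ((n : ℝ) - 1)))
  refine h.congr_deriv ?_
  rw [wProfile', show 2 * κ - 1 - 1 = 2 * κ - 2 by ring]
  field_simp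
  ring

lemma hasDerivAt_wProfile' (hs0 : s ≠ 0) (hs1 : s ≠ 1) :
    HasDerivAt (wProfile' n κ) (wProfile'' n κ s) s := by
  have h := (((hasDerivAt_one_sub_rpow (2 * κ - 2) hs1).const_mul (2 * κ * (2 * κ - 1))).sub
    (((hasDerivAt_one_sub_rpow (2 * κ - 1) hs1).div (hasDerivAt_id' s) hs0).const_mul
      (((n : ℝ) - 1) * κ))).sub
    (((hasDerivAt_one_sub_rpow (2 * κ) hs1).div (hasDerivAt_pow 2 s) (pow_ne_zero 2 hs0)).const_mul
      ((1 / 2) * ((n : ℝ) - 1)))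
  refine h.congr_deriv ?_
  rw [wProfile'', show 2 * κ - 2 - 1 = 2 * κ - 3 by ring, show 2 * κ - 1 - 1 = 2 * κ - 2 by ring]
  field_simp
  ring

end Profiles

section CarlemanWeight

variable {κ c t : ℝ} {x : Spc n}

lemma wfz_fC_eq (hκ : 1 + 2 * κ ≠ 0) (hx0 : x ≠ 0) (hx1 : ‖x‖ ≠ 1) :
    wfz κ (fC κ c) (-(4 * c)) t x = -(3 * c) + wProfile n κ ‖x‖ := by
  have hy : 1 - ‖x‖ ≠ 0 := sub_ne_zero.2 hx1.symm
  have hsep : ∀ᶠ z in 𝓝 x, ∀ s, fC κ c s z = -(c * s ^ 2) + fProfile κ ‖z‖ :=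
    Eventually.of_forall fun z s => by rw [fC, fProfile]; ring
  have hg (s : ℝ) : HasDerivAt (fun s => -(c * s ^ 2)) (-(2 * c * s)) s :=
    ((hasDerivAt_pow 2 s).const_mul c).neg.congr_deriv (by ring)
  have hg' : HasDerivAt (fun s => -(2 * c * s)) (-(2 * c)) t :=
    ((hasDerivAt_id' t).const_mul (2 * c)).neg.congr_deriv (by ring)
  have hφ : ∀ᶠ s in 𝓝 ‖x‖, HasDerivAt (fProfile κ) ((1 - s) ^ (2 * κ)) s :=
    (eventually_ne_nhds hx1).mono fun s hs => hasDerivAt_fProfile hκ hs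
  rw [wfz, waveOp_sub_pdr_of_separable κ hsep hx0 hg hg' hφ (hasDerivAt_one_sub_rpow (2 * κ) hx1),
    wProfile, Real.rpow_sub_one hy]
  field_simp
  ring

lemma Afz_fC_eq (hκ : 1 + 2 * κ ≠ 0) (hx0 : x ≠ 0) (hx1 : ‖x‖ ≠ 1) :
    Afz κ (fC κ c) (-(4 * c)) t x
      = -(1 / 2) * (wProfile'' n κ ‖x‖
          + ((n - 1) / ‖x‖ - 2 * κ / (1 - ‖x‖)) * wProfile' n κ ‖x‖) := by
  have hr : ‖x‖ ≠ 0 := norm_ne_zero_iff.2 hx0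
  have hsep : ∀ᶠ z in 𝓝 x, ∀ s, wfz κ (fC κ c) (-(4 * c)) s z = -(3 * c) + wProfile n κ ‖z‖ := by
    filter_upwards [eventually_ne_nhds hx0,
      (continuous_norm.tendsto x).eventually (eventually_ne_nhds hx1)] with z hz0 hz1 s
    exact wfz_fC_eq hκ hz0 hz1
  have hψ : ∀ᶠ s in 𝓝 ‖x‖, HasDerivAt (wProfile n κ) (wProfile' n κ s) s := by
    filter_upwards [eventually_ne_nhds hr, eventually_ne_nhds hx1] with s hs0 hs1
    exact hasDerivAt_wProfile hs0 hs1
  rw [Afz, waveOp_sub_pdr_of_separable κ hsep hx0 (fun s => hasDerivAt_const s _)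
    (hasDerivAt_const t 0) hψ (hasDerivAt_wProfile' hr hx1)]
  ring

lemma wProfile''_add_mul_wProfile' {s : ℝ} (hs0 : s ≠ 0) (hs1 : s ≠ 1) :
    wProfile'' n κ s + ((n - 1) / s - 2 * κ / (1 - s)) * wProfile' n κ s
      = -2 * (2 * κ * (2 * κ - 1) ^ 2 * (1 - s) ^ (2 * κ - 3)
          - (1 / 2) * ((n : ℝ) - 1) * κ * (8 * κ - 3) * (1 - s) ^ (2 * κ - 2) / s
          + (1 / 2) * ((n : ℝ) - 1) * ((n : ℝ) - 4) * κ * (1 - s) ^ (2 * κ - 1) / s ^ 2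
          + (1 / 4) * ((n : ℝ) - 1) * ((n : ℝ) - 3) * (1 - s) ^ (2 * κ) / s ^ 3) := by
  have hy : 1 - s ≠ 0 := sub_ne_zero.2 hs1.symm
  have hpow (k : ℕ) (a : ℝ) (ha : a = 2 * κ - 3 + k) :
      (1 - s) ^ a = (1 - s) ^ (2 * κ - 3) * (1 - s) ^ k := by
    rw [ha, Real.rpow_add_natCast hy]
  rw [wProfile'', wProfile', hpow 1 (2 * κ - 2) (by push_cast; ring),
    hpow 2 (2 * κ - 1) (by push_cast; ring), hpow 3 (2 * κ) (by push_cast; ring)]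
  field_simp
  ring

end CarlemanWeight

theorem wfz_Afz_of_carleman_weight_general
    (n : ℕ) (κ : ℝ) (hκ1 : -(1/2 : ℝ) < κ)
    (c : ℝ) :
    ∀ (t : ℝ) (x : Spc n), 0 < ‖x‖ → ‖x‖ < 1 →
      (wfz κ (fC κ c) (-(4*c)) t x
        = -(2*κ) * (1 - ‖x‖) ^ (2*κ - 1)
          + (1/2) * ((n : ℝ) - 1) * (1 - ‖x‖) ^ (2*κ) / ‖x‖ - 3*c)
      ∧ (Afz κ (fC κ c) (-(4*c)) t x
        = 2*κ*(2*κ - 1)^2 * (1 - ‖x‖) ^ (2*κ - 3)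
          - (1/2) * ((n : ℝ) - 1) * κ * (8*κ - 3) * (1 - ‖x‖) ^ (2*κ - 2) / ‖x‖
          + (1/2) * ((n : ℝ) - 1) * ((n : ℝ) - 4) * κ * (1 - ‖x‖) ^ (2*κ - 1) / ‖x‖^2
          + (1/4) * ((n : ℝ) - 1) * ((n : ℝ) - 3) * (1 - ‖x‖) ^ (2*κ) / ‖x‖^3) := by
  intro t x hx0 hx1
  have hκ : 1 + 2 * κ ≠ 0 := by linarith
  have hx : x ≠ 0 := norm_pos_iff.1 hx0
  constructor
  · rw [wfz_fC_eq hκ hx hx1.ne, wProfile]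
    ring
  · rw [Afz_fC_eq hκ hx hx1.ne, wProfile''_add_mul_wProfile' hx0.ne' hx1.ne]
    ring

/-- the identities for `w_{f,z}` and `𝒜_{f,z}` (Proposition 3.2). -/
theorem wfz_Afz_of_carleman_weight
    (n : ℕ) (κ : ℝ) (hκ1 : -(1/2 : ℝ) < κ) (hκ2 : κ < 0)
    (c : ℝ) (hc : 0 < c) :
    ∀ (t : ℝ) (x : Spc n), 0 < ‖x‖ → ‖x‖ < 1 →
      (wfz κ (fC κ c) (-(4*c)) t x
        = -(2*κ) * (1 - ‖x‖) ^ (2*κ - 1)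
          + (1/2) * ((n : ℝ) - 1) * (1 - ‖x‖) ^ (2*κ) / ‖x‖ - 3*c)
      ∧ (Afz κ (fC κ c) (-(4*c)) t x
        = 2*κ*(2*κ - 1)^2 * (1 - ‖x‖) ^ (2*κ - 3)
          - (1/2) * ((n : ℝ) - 1) * κ * (8*κ - 3) * (1 - ‖x‖) ^ (2*κ - 2) / ‖x‖
          + (1/2) * ((n : ℝ) - 1) * ((n : ℝ) - 4) * κ * (1 - ‖x‖) ^ (2*κ - 1) / ‖x‖^2
          + (1/4) * ((n : ℝ) - 1) * ((n : ℝ) - 3) * (1 - ‖x‖) ^ (2*κ) / ‖x‖^3) :=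
  wfz_Afz_of_carleman_weight_general n κ hκ1 c

end CarlemanWave
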